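/- arXiv:1310.2575 — 2 statements merged into one kernel-verified Lean document; each statement's English description precedes it below -/
import Mathlib

section
/- Let a₀ > 0 and let E₀ ∈ ℝ^{n×n} satisfy ‖E₀ − Iₙ‖ < 1 and ‖log(E₀)‖ < log 2. Define E(t) = exp(e^{−a₀ t} log(E₀)) for t ∈ ℝ. Then E(0) = E₀, and for every t ≥ 0: ‖E(t) − Iₙ‖ < 1, log(E(t)) = e^{−a₀ t} log(E₀), and E is differentiable at t with Ė(t) = −a₀ E(t) log(E(t)). -/
open scoped Matrix.Norms.L2Operator

/-- The principal matrix logarithm, defined by the convergent series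
`log X = ∑_{k=1}^∞ ((−1)^{k+1}/k) (X − I)^k` (here re-indexed over `k : ℕ`). -/
noncomputable def mlog {n : ℕ} (X : Matrix (Fin n) (Fin n) ℝ) : Matrix (Fin n) (Fin n) ℝ :=
  ∑' k : ℕ, (((-1 : ℝ) ^ k / (k + 1)) • (X - 1) ^ (k + 1))

open NormedSpace
open scoped Ring

/-!
`logSeries u = ∑ (-1)^k/(k+1) • u^(k+1)` is `log (1 + u)`. In a commutative Banach algebra it
has derivative `(1 + u)⁻¹` on the unit ball, so `t ↦ exp (-logSeries (t • u)) * (1 + t • u)` and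
`t ↦ logSeries (exp (t • A) - 1) - t • A` have zero derivative on `[0, 1]`. Comparing `t = 0` with
`t = 1` gives `exp (logSeries u) = 1 + u` for `‖u‖ < 1`, and `logSeries (exp A - 1) = A` for
`‖A‖ < log 2`, the latter because then `‖exp (t • A) - 1‖ ≤ e^‖A‖ - 1 < 1`. Both identities
involve a single element, so they transfer to any Banach algebra through the closed commutative
subalgebra that element generates. For the flow, `‖e^{-a₀t} • log E₀‖ < log 2` when `t ≥ 0`, so
`log (E t) = e^{-a₀t} • log E₀` and the derivative of `E` follows from the chain rule.
-/

theorem norm_pow_mul_le {𝔸 : Type*} [NormedRing 𝔸] (x y : 𝔸) (k : ℕ) :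
    ‖x ^ k * y‖ ≤ ‖x‖ ^ k * ‖y‖ := by
  induction k with
  | zero => simp
  | succ k ih =>
    calc ‖x ^ (k + 1) * y‖ = ‖x * (x ^ k * y)‖ := by rw [pow_succ', mul_assoc]
      _ ≤ ‖x‖ * (‖x‖ ^ k * ‖y‖) := (norm_mul_le _ _).trans (by gcongr)
      _ = ‖x‖ ^ (k + 1) * ‖y‖ := by ring

section NormedRing

variable {𝔸 : Type*} [NormedRing 𝔸] [NormedAlgebra ℝ 𝔸]

noncomputable def logSeries (u : 𝔸) : 𝔸 :=
  ∑' k : ℕ, ((-1 : ℝ) ^ k / (k + 1)) • u ^ (k + 1)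

theorem logSeries_zero : logSeries (0 : 𝔸) = 0 := by
  simp [logSeries]

variable [CompleteSpace 𝔸]

theorem summable_logSeries {u : 𝔸} (hu : ‖u‖ < 1) :
    Summable fun k : ℕ => ((-1 : ℝ) ^ k / (k + 1)) • u ^ (k + 1) := by
  refine .of_norm_bounded ((summable_geometric_of_lt_one (norm_nonneg u) hu).mul_left ‖u‖)
    fun k => ?_
  have hcoeff : ‖(-1 : ℝ) ^ k / (k + 1)‖ ≤ 1 := by
    rw [norm_div, norm_pow, norm_neg, norm_one, one_pow, Real.norm_of_nonneg (by positivity)]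
    exact div_le_one_of_le₀ (by linarith [k.cast_nonneg (α := ℝ)]) (by positivity)
  calc ‖((-1 : ℝ) ^ k / (k + 1)) • u ^ (k + 1)‖ ≤ 1 * ‖u‖ ^ (k + 1) := by
        rw [norm_smul]; gcongr; exact norm_pow_le' u k.succ_pos
    _ = ‖u‖ * ‖u‖ ^ k := by ring

theorem map_logSeries {𝔹 : Type*} [NormedRing 𝔹] [NormedAlgebra ℝ 𝔹] [CompleteSpace 𝔹]
    (φ : 𝔸 →ₐ[ℝ] 𝔹) (hφ : Continuous φ) {u : 𝔸} (hu : ‖u‖ < 1) :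
    φ (logSeries u) = logSeries (φ u) := by
  simpa only [logSeries, Function.comp_def, map_smul, map_pow] using
    ((summable_logSeries hu).hasSum.map φ hφ).tsum_eq.symm

theorem norm_exp_sub_one_le (A : 𝔸) : ‖exp A - 1‖ ≤ Real.exp ‖A‖ - 1 := by
  have hA := (hasSum_nat_add_iff' 1).2 (exp_series_hasSum_exp' (𝕂 := ℝ) A)
  have hnorm := (hasSum_nat_add_iff' 1).2 (exp_series_hasSum_exp' (𝕂 := ℝ) ‖A‖)
  simp only [Finset.range_one, Finset.sum_singleton, Nat.factorial_zero, Nat.cast_one, inv_one,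
    pow_zero, one_smul, ← Real.exp_eq_exp_ℝ] at hA hnorm
  refine hA.norm_le_of_bounded hnorm fun k => ?_
  rw [norm_smul, Real.norm_of_nonneg (by positivity), smul_eq_mul]
  gcongr
  exact norm_pow_le' A k.succ_pos

theorem norm_exp_sub_one_lt_one {A : 𝔸} (hA : ‖A‖ < Real.log 2) : ‖exp A - 1‖ < 1 := by
  have := Real.exp_lt_exp.2 hA
  rw [Real.exp_log two_pos] at this
  linarith [norm_exp_sub_one_le A]

theorem exp_neg_mul_exp (x : 𝔸) : exp (-x) * exp x = 1 := by
  have hball : ∀ y : 𝔸, y ∈ Metric.eball (0 : 𝔸) (expSeries ℝ 𝔸).radius := fun y =>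
    (expSeries_radius_eq_top ℝ 𝔸).symm ▸ edist_lt_top _ _
  rw [← exp_add_of_commute_of_mem_ball (Commute.refl x).neg_left (hball _) (hball _),
    neg_add_cancel, exp_zero]

end NormedRing

theorem eq_of_hasDerivAt_eq_zero {E : Type*} [NormedAddCommGroup E] [NormedSpace ℝ E]
    {f : ℝ → E} {a b : ℝ} (hab : a ≤ b) (hf : ∀ t ∈ Set.Icc a b, HasDerivAt f 0 t) :
    f b = f a :=
  constant_of_has_deriv_right_zero (fun t ht => (hf t ht).continuousAt.continuousWithinAt)
    (fun t ht => (hf t (Set.Ico_subset_Icc_self ht)).hasDerivWithinAt) b ⟨hab, le_rfl⟩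

section NormedCommRing

variable {𝔹 : Type*} [NormedCommRing 𝔹] [NormedAlgebra ℝ 𝔹]

theorem hasFDerivAt_logSeries_term (k : ℕ) (u : 𝔹) :
    HasFDerivAt (fun v : 𝔹 => ((-1 : ℝ) ^ k / (k + 1)) • v ^ (k + 1))
      (ContinuousLinearMap.mul ℝ 𝔹 ((-u) ^ k)) u := by
  refine ((hasFDerivAt_pow (𝕜 := ℝ) (k + 1) (x := u)).const_smul
    ((-1 : ℝ) ^ k / (k + 1))).congr_fderiv ?_
  ext h
  have hk : (k + 1 : ℝ) ≠ 0 := by positivity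
  simp only [FunLike.coe_smul, Pi.smul_apply, ContinuousLinearMap.id_apply,
    ContinuousLinearMap.mul_apply', add_tsub_cancel_right, smul_eq_mul]
  rw [← Nat.cast_smul_eq_nsmul ℝ, smul_mul_assoc, smul_smul, Nat.cast_add_one,
    div_mul_cancel₀ _ hk, ← neg_one_smul ℝ u, smul_pow, smul_mul_assoc]

variable [CompleteSpace 𝔹]

theorem hasFDerivAt_logSeries {u : 𝔹} (hu : ‖u‖ < 1) :
    HasFDerivAt logSeries (ContinuousLinearMap.mul ℝ 𝔹 (1 + u)⁻¹ʳ) u := by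
  obtain ⟨r, hur, hr⟩ := exists_between hu
  have hr0 : 0 < r := (norm_nonneg u).trans_lt hur
  have hgeom : (1 + u)⁻¹ʳ = ∑' k : ℕ, (-u) ^ k := by
    rw [geom_series_eq_inverse _ (by rwa [norm_neg]), sub_neg_eq_add]
  have hbound : ∀ k, ∀ v ∈ Metric.ball (0 : 𝔹) r,
      ‖ContinuousLinearMap.mul ℝ 𝔹 ((-v) ^ k)‖ ≤ r ^ k := by
    intro k v hv
    rw [mem_ball_zero_iff, ← norm_neg v] at hv
    refine ContinuousLinearMap.opNorm_le_bound _ (pow_nonneg hr0.le k) fun h => ?_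
    exact (norm_pow_mul_le _ _ _).trans (by gcongr)
  have h0 : Summable fun k : ℕ => ((-1 : ℝ) ^ k / (k + 1)) • (0 : 𝔹) ^ (k + 1) := by
    simp [summable_zero]
  rw [hgeom, (ContinuousLinearMap.mul ℝ 𝔹).map_tsum]
  · exact hasFDerivAt_tsum_of_isPreconnected (summable_geometric_of_lt_one hr0.le hr)
      Metric.isOpen_ball (convex_ball (0 : 𝔹) r).isPreconnected
      (fun k v _ => hasFDerivAt_logSeries_term k v) hbound (Metric.mem_ball_self hr0) h0
      (mem_ball_zero_iff.2 hur)
  · exact summable_geometric_of_norm_lt_one (by rwa [norm_neg])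

theorem HasDerivAt.logSeries {q : ℝ → 𝔹} {q' : 𝔹} {t : ℝ} (hq : HasDerivAt q q' t)
    (ht : ‖q t‖ < 1) : HasDerivAt (fun s => _root_.logSeries (q s)) ((1 + q t)⁻¹ʳ * q') t :=
  (hasFDerivAt_logSeries ht).comp_hasDerivAt t hq

theorem HasDerivAt.normedSpace_exp {f : ℝ → 𝔹} {f' : 𝔹} {t : ℝ} (hf : HasDerivAt f f' t) :
    HasDerivAt (fun s => NormedSpace.exp (f s)) (NormedSpace.exp (f t) * f') t :=
  ((hasFDerivAt_exp (𝕂 := ℝ) (x := f t)).comp_hasDerivAt t hf).congr_deriv (by simp)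

theorem exp_logSeries_comm {u : 𝔹} (hu : ‖u‖ < 1) : exp (logSeries u) = 1 + u := by
  have hsmall : ∀ t ∈ Set.Icc (0 : ℝ) 1, ‖t • u‖ < 1 := fun t ht => by
    rw [norm_smul, Real.norm_of_nonneg ht.1]
    nlinarith [norm_nonneg u, ht.2]
  have hconst := eq_of_hasDerivAt_eq_zero zero_le_one
    (f := fun t : ℝ => exp (-logSeries (t • u)) * (1 + t • u)) fun t ht => by
      have hline : HasDerivAt (fun s : ℝ => s • u) u t := by
        simpa using (hasDerivAt_id t).smul_const u
      have hunit : IsUnit (1 + t • u) := by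
        simpa using isUnit_one_sub_of_norm_lt_one (x := -(t • u))
          (by rw [norm_neg]; exact hsmall t ht)
      refine (((hline.logSeries (hsmall t ht)).fun_neg.normedSpace_exp).fun_mul
        (hline.const_add 1)).congr_deriv ?_
      linear_combination -(exp (-logSeries (t • u)) * u) * Ring.inverse_mul_cancel _ hunit
  simp only [one_smul, zero_smul, logSeries_zero, neg_zero, exp_zero, add_zero, mul_one] at hconst
  calc exp (logSeries u) = exp (logSeries u) * (exp (-logSeries u) * (1 + u)) := by
        rw [hconst, mul_one]
    _ = 1 + u := by rw [mul_left_comm, ← mul_assoc, exp_neg_mul_exp, one_mul]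

theorem logSeries_exp_sub_one_comm {A : 𝔹} (hA : ‖A‖ < Real.log 2) :
    logSeries (exp A - 1) = A := by
  have hsmall : ∀ t ∈ Set.Icc (0 : ℝ) 1, ‖exp (t • A) - 1‖ < 1 := fun t ht => by
    refine norm_exp_sub_one_lt_one (lt_of_le_of_lt ?_ hA)
    rw [norm_smul, Real.norm_of_nonneg ht.1]
    nlinarith [norm_nonneg A, ht.2]
  have hconst := eq_of_hasDerivAt_eq_zero zero_le_one
    (f := fun t : ℝ => logSeries (exp (t • A) - 1) - t • A) fun t ht => by
      have hexp := (hasDerivAt_exp_smul_const (𝕂 := ℝ) A t).sub_const 1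
      have hunit : IsUnit (exp (t • A)) :=
        IsUnit.of_mul_eq_one_right _ (exp_neg_mul_exp (t • A))
      refine ((hexp.logSeries (hsmall t ht)).fun_sub
        ((hasDerivAt_id t).smul_const A)).congr_deriv ?_
      rw [add_sub_cancel, Ring.inverse_mul_cancel_left _ _ hunit, one_smul, sub_self]
  simpa [logSeries_zero, sub_eq_zero] using hconst

end NormedCommRing

section Elemental

variable {𝔸 : Type*} [NormedRing 𝔸] [NormedAlgebra ℝ 𝔸] [CompleteSpace 𝔸]

noncomputable instance (x : 𝔸) : NormedCommRing (Algebra.elemental ℝ x) :=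
  { toNormedRing := SubringClass.toNormedRing (Algebra.elemental ℝ x), mul_comm := mul_comm }

theorem Algebra.elemental.coe_exp {x : 𝔸} (y : Algebra.elemental ℝ x) :
    ((exp y : Algebra.elemental ℝ x) : 𝔸) = exp (y : 𝔸) :=
  map_exp_of_mem_ball (𝕂 := ℝ) (Algebra.elemental ℝ x).val continuous_subtype_val y
    ((expSeries_radius_eq_top ℝ (Algebra.elemental ℝ x)).symm ▸ edist_lt_top _ _)

theorem Algebra.elemental.coe_logSeries {x : 𝔸} {y : Algebra.elemental ℝ x} (hy : ‖y‖ < 1) :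
    ((logSeries y : Algebra.elemental ℝ x) : 𝔸) = logSeries (y : 𝔸) :=
  map_logSeries (Algebra.elemental ℝ x).val continuous_subtype_val hy

theorem exp_logSeries {u : 𝔸} (hu : ‖u‖ < 1) : exp (logSeries u) = 1 + u := by
  let v : Algebra.elemental ℝ u := ⟨u, Algebra.elemental.self_mem ℝ u⟩
  have hv : ‖v‖ < 1 := hu
  -- the ascription elaborates `logSeries v` with the `NormedRing` instance `coe_logSeries` uses
  have h : ((exp (logSeries v) : Algebra.elemental ℝ u) : 𝔸) =
      ((1 + v : Algebra.elemental ℝ u) : 𝔸) :=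
    congrArg _ (exp_logSeries_comm hv)
  rwa [Algebra.elemental.coe_exp, Algebra.elemental.coe_logSeries hv] at h

theorem logSeries_exp_sub_one {A : 𝔸} (hA : ‖A‖ < Real.log 2) : logSeries (exp A - 1) = A := by
  let B : Algebra.elemental ℝ A := ⟨A, Algebra.elemental.self_mem ℝ A⟩
  have hB : ‖B‖ < Real.log 2 := hA
  have h : ((logSeries (exp B - 1) : Algebra.elemental ℝ A) : 𝔸) = B :=
    congrArg _ (logSeries_exp_sub_one_comm hB)
  rwa [Algebra.elemental.coe_logSeries (norm_exp_sub_one_lt_one hB), Subalgebra.coe_sub,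
    Subalgebra.coe_one, Algebra.elemental.coe_exp] at h

end Elemental

theorem mlog_eq_logSeries {n : ℕ} (X : Matrix (Fin n) (Fin n) ℝ) : mlog X = logSeries (X - 1) :=
  rfl

/-- For `a₀ > 0` and `E₀` with `‖E₀ − Iₙ‖ < 1`, `‖log E₀‖ < log 2`, the curve
`E(t) = exp(e^{−a₀ t} log E₀)` satisfies `E(0) = E₀` and, for all `t ≥ 0`:
`‖E(t) − Iₙ‖ < 1`, `log (E t) = e^{−a₀ t} log E₀`, and `Ė(t) = −a₀ E(t) log (E t)`. -/
theorem flow_solves_log_ode {n : ℕ} (a₀ : ℝ) (ha : 0 < a₀)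
    (E₀ : Matrix (Fin n) (Fin n) ℝ)
    (h1 : ‖E₀ - 1‖ < 1) (h2 : ‖mlog E₀‖ < Real.log 2)
    (E : ℝ → Matrix (Fin n) (Fin n) ℝ)
    (hE : ∀ t : ℝ, E t = NormedSpace.exp (Real.exp (-a₀ * t) • mlog E₀)) :
    E 0 = E₀ ∧
      ∀ t : ℝ, 0 ≤ t →
        ‖E t - 1‖ < 1 ∧
        mlog (E t) = Real.exp (-a₀ * t) • mlog E₀ ∧
        HasDerivAt E (-(a₀ • (E t * mlog (E t)))) t := by
  refine ⟨?_, fun t ht => ?_⟩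
  · rw [hE, mul_zero, Real.exp_zero, one_smul, mlog_eq_logSeries, exp_logSeries h1,
      add_sub_cancel]
  have hsmall : ‖Real.exp (-a₀ * t) • mlog E₀‖ < Real.log 2 := by
    rw [norm_smul, Real.norm_of_nonneg (Real.exp_nonneg _)]
    have hdecay : Real.exp (-a₀ * t) ≤ 1 := Real.exp_le_one_iff.2 (by nlinarith)
    nlinarith [norm_nonneg (mlog E₀), Real.exp_pos (-a₀ * t)]
  have hlog : mlog (E t) = Real.exp (-a₀ * t) • mlog E₀ := by
    rw [hE, mlog_eq_logSeries, logSeries_exp_sub_one hsmall]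
  refine ⟨by rw [hE]; exact norm_exp_sub_one_lt_one hsmall, hlog, ?_⟩
  obtain rfl : E = fun τ => exp (Real.exp (-a₀ * τ) • mlog E₀) := funext hE
  rw [hlog]
  refine ((hasDerivAt_exp_smul_const (𝕂 := ℝ) (mlog E₀) _).scomp t
    ((hasDerivAt_id' t).const_mul (-a₀)).exp).congr_deriv ?_
  beta_reduce
  rw [mul_smul_comm, smul_smul, ← neg_smul]
  congr 1
  ring
end

section
/- Let a₀ ∈ ℝ, let u : ℝ → ℝ^{n×n}, and let X, X̂ : ℝ → ℝ^{n×n} be differentiable with X(t) invertible for all t. Suppose that at time t: Ẋ(t) = X(t) u(t); X̂ satisfies the passive observer equation Ẋ̂(t) = X̂(t) u(t) − a₀ X̂(t) log(X(t)⁻¹ X̂(t)); and ‖X(t)⁻¹ X̂(t) − Iₙ‖ < 1. Then the left-invariant error E_l(s) = X(s)⁻¹ X̂(s) is differentiable at t with Ė_l(t) = −a₀ E_l(t) log(E_l(t)) + (E_l(t) u(t) − u(t) E_l(t)). -/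
/-!
If `Ẋ = X u` and `Ẋ̂ = X̂ v`, the product rule and `d(X⁻¹) = -X⁻¹ Ẋ X⁻¹` give
`d(X⁻¹ X̂) = E v - u E` for `E = X⁻¹ X̂`; the passive observer is the case `v = u - a₀ log E`.
-/

open scoped Matrix.Norms.L2Operator

theorem HasDerivAt.ringInverse {𝕜 R : Type*} [NontriviallyNormedField 𝕜] [NormedRing R]
    [HasSummableGeomSeries R] [NormedAlgebra 𝕜 R] {f : 𝕜 → R} {f' : R} {x : 𝕜}
    (hf : HasDerivAt f f' x) (hx : IsUnit (f x)) :
    HasDerivAt (fun s => Ring.inverse (f s))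
      (-(Ring.inverse (f x) * f' * Ring.inverse (f x))) x := by
  obtain ⟨u, hu⟩ := hx
  have hinverse : HasFDerivAt Ring.inverse
      (-ContinuousLinearMap.mulLeftRight 𝕜 R ↑u⁻¹ ↑u⁻¹) (f x) :=
    hu ▸ hasFDerivAt_ringInverse u
  rw [← hu, Ring.inverse_unit]
  exact hinverse.comp_hasDerivAt x hf

namespace Matrix

variable {𝕜 m : Type*} [RCLike 𝕜] [Fintype m] [DecidableEq m]

theorem hasDerivAt_inv {X : 𝕜 → Matrix m m 𝕜} {X' : Matrix m m 𝕜} {t : 𝕜}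
    (hX : HasDerivAt X X' t) (ht : IsUnit (X t)) :
    HasDerivAt (fun s => (X s)⁻¹) (-((X t)⁻¹ * X' * (X t)⁻¹)) t := by
  simpa only [nonsing_inv_eq_ringInverse] using hX.ringInverse ht

theorem hasDerivAt_inv_mul_of_mul {X Y : 𝕜 → Matrix m m 𝕜} {u v : Matrix m m 𝕜} {t : 𝕜}
    (hX : HasDerivAt X (X t * u) t) (hY : HasDerivAt Y (Y t * v) t) (ht : IsUnit (X t)) :
    HasDerivAt (fun s => (X s)⁻¹ * Y s) ((X t)⁻¹ * Y t * v - u * ((X t)⁻¹ * Y t)) t := by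
  have hXX : (X t)⁻¹ * X t = 1 := nonsing_inv_mul _ ((isUnit_iff_isUnit_det _).mp ht)
  refine ((hasDerivAt_inv hX ht).mul hY).congr_deriv ?_
  simp only [← mul_assoc, hXX, one_mul]
  noncomm_ring

end Matrix

theorem passive_observer_left_error_general {n : ℕ} (a₀ : ℝ)
    (u X Xhat X' Xhat' : ℝ → Matrix (Fin n) (Fin n) ℝ)
    (hXd : ∀ s : ℝ, HasDerivAt X (X' s) s)
    (hXhd : ∀ s : ℝ, HasDerivAt Xhat (Xhat' s) s)
    (hinv : ∀ s : ℝ, IsUnit (X s))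
    (t : ℝ)
    (hplant : X' t = X t * u t)
    (hobs : Xhat' t = Xhat t * u t - a₀ • (Xhat t * mlog ((X t)⁻¹ * Xhat t))) :
    HasDerivAt (fun s => (X s)⁻¹ * Xhat s)
      (-(a₀ • (((X t)⁻¹ * Xhat t) * mlog ((X t)⁻¹ * Xhat t))) +
        (((X t)⁻¹ * Xhat t) * u t - u t * ((X t)⁻¹ * Xhat t))) t := by
  have hXhat : HasDerivAt Xhat (Xhat t * (u t - a₀ • mlog ((X t)⁻¹ * Xhat t))) t := by
    rw [mul_sub, mul_smul_comm, ← hobs]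
    exact hXhd t
  refine (Matrix.hasDerivAt_inv_mul_of_mul (hplant ▸ hXd t) hXhat (hinv t)).congr_deriv ?_
  rw [mul_sub, mul_smul_comm]
  abel

/-- Passive observer, left-invariant error: if at time `t` the plant satisfies `Ẋ = X u` and
the observer satisfies `Ẋ̂ = X̂ u − a₀ X̂ log(X⁻¹ X̂)`, with `‖X⁻¹ X̂ − Iₙ‖ < 1`, then the
left-invariant error `E_l = X⁻¹ X̂` satisfies `Ė_l = −a₀ E_l log E_l + (E_l u − u E_l)`
at `t`. -/
theorem passive_observer_left_error {n : ℕ} (a₀ : ℝ)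
    (u X Xhat X' Xhat' : ℝ → Matrix (Fin n) (Fin n) ℝ)
    (hXd : ∀ s : ℝ, HasDerivAt X (X' s) s)
    (hXhd : ∀ s : ℝ, HasDerivAt Xhat (Xhat' s) s)
    (hinv : ∀ s : ℝ, IsUnit (X s))
    (t : ℝ)
    (hplant : X' t = X t * u t)
    (hobs : Xhat' t = Xhat t * u t - a₀ • (Xhat t * mlog ((X t)⁻¹ * Xhat t)))
    (hEl : ‖(X t)⁻¹ * Xhat t - 1‖ < 1) :
    HasDerivAt (fun s => (X s)⁻¹ * Xhat s)
      (-(a₀ • (((X t)⁻¹ * Xhat t) * mlog ((X t)⁻¹ * Xhat t))) +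
        (((X t)⁻¹ * Xhat t) * u t - u t * ((X t)⁻¹ * Xhat t))) t :=
  passive_observer_left_error_general a₀ u X Xhat X' Xhat' hXd hXhd hinv t hplant hobs
end
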